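/- arXiv:1607.04803 — 13 statements merged into one kernel-verified Lean document; each statement's English description precedes it below -/
import Mathlib

section
/- Let J be a finite set and 𝒮 a finite family of subsets of J that covers J and is irredundant (no member is contained in another). Then the maximal independent sets of the conflict hypergraph H^c_𝒮 (whose hyperedges are the minimal infeasible subsets of J, i.e. minimal sets not contained in any member of 𝒮) are exactly the members of 𝒮. -/
open Finset

/-- `T` is feasible for the CDC induced by `𝒮`: it is contained in some member of `𝒮`. -/
def Feasible {α : Type*} (𝒮 : Finset (Finset α)) (T : Finset α) : Prop :=
  ∃ S ∈ 𝒮, T ⊆ S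

/-- `E` is a minimal infeasible subset of the ground set `J`. -/
def MinInfeasible {α : Type*} (J : Finset α) (𝒮 : Finset (Finset α)) (E : Finset α) : Prop :=
  E ⊆ J ∧ ¬ Feasible 𝒮 E ∧ ∀ E' ⊂ E, Feasible 𝒮 E'

/-- `U` is (weakly) independent in the conflict hypergraph: it contains no minimal
infeasible set. -/
def HyperIndep {α : Type*} (J : Finset α) (𝒮 : Finset (Finset α)) (U : Finset α) : Prop :=
  ∀ E : Finset α, MinInfeasible J 𝒮 E → ¬ E ⊆ U

/-- Any infeasible subset of `J` contains a minimal infeasible set. -/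
lemma exists_min_infeasible {α : Type*} [DecidableEq α] (J : Finset α) (𝒮 : Finset (Finset α)) :
    ∀ U : Finset α, U ⊆ J → ¬ Feasible 𝒮 U → ∃ E ⊆ U, MinInfeasible J 𝒮 E := by
  intro U
  induction U using Finset.strongInduction with
  | _ U ih =>
    intro hUJ hUinf
    by_cases h : ∀ E' ⊂ U, Feasible 𝒮 E'
    · exact ⟨U, Subset.refl U, hUJ, hUinf, h⟩
    · push_neg at h
      obtain ⟨E', hE'U, hE'inf⟩ := h
      obtain ⟨E, hEE', hE⟩ := ih E' hE'U (hE'U.subset.trans hUJ) hE'inf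
      exact ⟨E, hEE'.trans hE'U.subset, hE⟩

lemma indep_iff_feasible {α : Type*} [DecidableEq α] (J : Finset α) (𝒮 : Finset (Finset α))
    (U : Finset α) (hUJ : U ⊆ J) : HyperIndep J 𝒮 U ↔ Feasible 𝒮 U := by
  constructor
  · intro hI
    by_contra hinf
    obtain ⟨E, hEU, hE⟩ := exists_min_infeasible J 𝒮 U hUJ hinf
    exact hI E hE hEU
  · rintro ⟨S, hS, hUS⟩ E hE hEU
    exact hE.2.1 ⟨S, hS, hEU.trans hUS⟩

/-- The maximal independent sets of the conflict hypergraph are exactly the members of `𝒮`. -/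
theorem stmt0 {α : Type*} [DecidableEq α] (J : Finset α) (𝒮 : Finset (Finset α))
    (hcover : ∀ v ∈ J, ∃ S ∈ 𝒮, v ∈ S)
    (hsubJ : ∀ S ∈ 𝒮, S ⊆ J)
    (hirr : ∀ S ∈ 𝒮, ∀ T ∈ 𝒮, S ⊆ T → S = T) :
    ∀ U : Finset α,
      (U ⊆ J ∧ HyperIndep J 𝒮 U ∧
        ∀ U' : Finset α, U ⊂ U' → U' ⊆ J → ¬ HyperIndep J 𝒮 U') ↔ U ∈ 𝒮 := by
  intro U
  constructor
  · rintro ⟨hUJ, hI, hmax⟩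
    obtain ⟨S, hS, hUS⟩ := (indep_iff_feasible J 𝒮 U hUJ).mp hI
    rcases eq_or_lt_of_le hUS with rfl | hlt
    · exact hS
    · exact absurd ((indep_iff_feasible J 𝒮 S (hsubJ S hS)).mpr ⟨S, hS, Subset.refl S⟩)
        (hmax S hlt (hsubJ S hS))
  · intro hU
    refine ⟨hsubJ U hU, (indep_iff_feasible J 𝒮 U (hsubJ U hU)).mpr ⟨U, hU, Subset.refl U⟩, ?_⟩
    intro U' hUU' hU'J hI'
    obtain ⟨T, hT, hU'T⟩ := (indep_iff_feasible J 𝒮 U' hU'J).mp hI'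
    have : U = T := hirr U hU T hT (hUU'.subset.trans hU'T)
    exact hUU'.not_subset (hU'T.trans this.ge)
end

section
/- Let J be a finite set and 𝒮 an irredundant covering family of subsets of J, with minimal infeasible sets ℰ_𝒮. If there exists a k-way independent branching scheme for CDC(𝒮), i.e. sets L^j_i ⊆ J for j ∈ [t], i ∈ [k] such that a set T ⊆ J is feasible (contained in some S ∈ 𝒮) if and only if for every j ∈ [t] there exists i ∈ [k] with T ⊆ L^j_i, then every minimal infeasible set has cardinality at most k. -/
open Finset

/-- If a `k`-way independent branching scheme exists for `CDC(𝒮)`, then every minimal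
infeasible set has cardinality at most `k`. -/
theorem stmt1 {α : Type*} [DecidableEq α] (J : Finset α) (𝒮 : Finset (Finset α))
    (hcover : ∀ v ∈ J, ∃ S ∈ 𝒮, v ∈ S)
    (hsubJ : ∀ S ∈ 𝒮, S ⊆ J)
    (hirr : ∀ S ∈ 𝒮, ∀ T ∈ 𝒮, S ⊆ T → S = T)
    (t k : ℕ) (L : Fin t → Fin k → Finset α)
    (hscheme : ∀ T ⊆ J, (Feasible 𝒮 T ↔ ∀ j : Fin t, ∃ i : Fin k, T ⊆ L j i)) :
    ∀ E : Finset α, MinInfeasible J 𝒮 E → E.card ≤ k := by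
  intro E ⟨hEJ, hinf, hmin⟩
  by_contra hcard
  push_neg at hcard
  -- E is infeasible, so some level j has no branch containing E
  have hnot : ¬ ∀ j : Fin t, ∃ i : Fin k, E ⊆ L j i := fun h => hinf ((hscheme E hEJ).mpr h)
  push_neg at hnot
  obtain ⟨j, hj⟩ := hnot
  -- for each e ∈ E, E \ {e} is feasible, pick branch f e at level j
  have hchoice : ∀ e ∈ E, ∃ i : Fin k, E.erase e ⊆ L j i := by
    intro e he
    have hfe : Feasible 𝒮 (E.erase e) := hmin _ (erase_ssubset he)
    exact ((hscheme (E.erase e) ((erase_subset e E).trans hEJ)).mp hfe) j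
  choose f hf using hchoice
  -- pigeonhole: |E| > k, so two distinct elements share a branch
  have := Finset.exists_ne_map_eq_of_card_lt_of_maps_to
    (s := E.attach) (t := Finset.univ (α := Fin k))
    (by simpa using hcard) (fun a _ => Finset.mem_univ (f a.1 a.2))
  obtain ⟨a, _, b, _, hab, heq⟩ := this
  apply hj (f a.1 a.2)
  intro x hx
  rcases eq_or_ne x a.1 with hxa | hxa
  · have : x ∈ E.erase b.1 := Finset.mem_erase.mpr ⟨fun h => hab (Subtype.ext (hxa ▸ h)), hx⟩
    exact heq ▸ hf b.1 b.2 this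
  · exact hf a.1 a.2 (Finset.mem_erase.mpr ⟨hxa, hx⟩)
end

section
/- For the cardinality constraint of degree ℓ on a finite ground set J with ℓ < |J|, where 𝒮 = {S ⊆ J : |S| = ℓ}, a k-way independent branching scheme exists if and only if k > ℓ. Equivalently, every minimal infeasible set has cardinality exactly ℓ+1. -/
open Finset

lemma feas_iff {α : Type*} [DecidableEq α] (J : Finset α) (ℓ : ℕ) (hlJ : ℓ ≤ J.card)
    (T : Finset α) (hT : T ⊆ J) : Feasible (J.powersetCard ℓ) T ↔ T.card ≤ ℓ := by
  constructor
  · rintro ⟨S, hS, hTS⟩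
    rw [Finset.mem_powersetCard] at hS
    exact hS.2 ▸ Finset.card_le_card hTS
  · intro h
    obtain ⟨S, hTS, hSJ, hScard⟩ := Finset.exists_subsuperset_card_eq hT h hlJ
    exact ⟨S, Finset.mem_powersetCard.2 ⟨hSJ, hScard⟩, hTS⟩

/-- For the cardinality constraint of degree `ℓ` (with `1 ≤ ℓ < |J|`), a `k`-way
independent branching scheme exists iff `k > ℓ`; equivalently, the minimal infeasible sets
are exactly the subsets of `J` of cardinality `ℓ + 1`. -/
theorem stmt3 {α : Type*} [DecidableEq α] (J : Finset α) (ℓ k : ℕ)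
    (hl : 1 ≤ ℓ) (hlJ : ℓ < J.card) :
    ((∃ (t : ℕ) (L : Fin t → Fin k → Finset α),
        ∀ T ⊆ J, (Feasible (J.powersetCard ℓ) T ↔ ∀ j : Fin t, ∃ i : Fin k, T ⊆ L j i))
      ↔ ℓ < k) ∧
    (∀ E : Finset α, MinInfeasible J (J.powersetCard ℓ) E ↔ (E ⊆ J ∧ E.card = ℓ + 1)) := by
  have hfeas := feas_iff J ℓ hlJ.le
  have hJne : J.Nonempty := Finset.card_pos.1 (by omega)
  constructor
  · constructor
    · -- scheme exists → ℓ < k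
      rintro ⟨t, L, hL⟩
      by_contra hk
      push_neg at hk
      -- take E ⊆ J with |E| = ℓ + 1
      obtain ⟨E, hEJ, hEcard⟩ := Finset.exists_subset_card_eq (show ℓ + 1 ≤ J.card by omega)
      have hEinf : ¬ (∀ j : Fin t, ∃ i : Fin k, E ⊆ L j i) := by
        rw [← hL E hEJ, hfeas E hEJ, hEcard]; omega
      push_neg at hEinf
      obtain ⟨j, hj⟩ := hEinf
      -- each E.erase e is feasible, so covered at j
      have herase : ∀ e ∈ E, ∃ i : Fin k, E.erase e ⊆ L j i := by
        intro e he
        have h1 : E.erase e ⊆ J := (Finset.erase_subset e E).trans hEJ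
        have h2 : Feasible (J.powersetCard ℓ) (E.erase e) := by
          rw [hfeas _ h1, Finset.card_erase_of_mem he, hEcard]; omega
        exact (hL _ h1).1 h2 j
      have hEne : E.Nonempty := Finset.card_pos.1 (by omega)
      obtain ⟨e0, he0⟩ := hEne
      haveI : Nonempty (Fin k) := ⟨(herase e0 he0).choose⟩
      set f : α → Fin k := fun e =>
        if h : ∃ i : Fin k, E.erase e ⊆ L j i then h.choose else Classical.arbitrary _ with hf
      have hfspec : ∀ e ∈ E, E.erase e ⊆ L j (f e) := by
        intro e he
        have h := herase e he
        simp only [hf, dif_pos h]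
        exact h.choose_spec
      have hcard : (Finset.univ : Finset (Fin k)).card < E.card := by
        simp [hEcard]; omega
      obtain ⟨x, hx, y, hy, hxy, hfxy⟩ :=
        Finset.exists_ne_map_eq_of_card_lt_of_maps_to hcard
          (fun a _ => Finset.mem_univ (f a))
      have : E ⊆ L j (f x) := by
        intro a ha
        rcases eq_or_ne a x with rfl | hax
        · exact hfxy ▸ hfspec y hy (Finset.mem_erase.2 ⟨hxy, ha⟩)
        · exact hfspec x hx (Finset.mem_erase.2 ⟨hax, ha⟩)
      exact hj (f x) this
    · -- ℓ < k → scheme exists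
      intro hk
      obtain ⟨a0, ha0⟩ := hJne
      set Pcal := J.powersetCard (ℓ + 1) with hPcal
      set t := Pcal.card with ht
      set e : ↥Pcal ≃ Fin t := Fintype.equivFinOfCardEq (Fintype.card_coe Pcal) with he
      refine ⟨t, fun j i => J \ {((e.symm j : Finset α)).toList.getD (min i ℓ) a0}, ?_⟩
      intro T hT
      rw [hfeas T hT]
      constructor
      · intro hTcard j
        set E : Finset α := (e.symm j : Finset α) with hE
        have hEmem : E ∈ Pcal := (e.symm j).2
        rw [hPcal, Finset.mem_powersetCard] at hEmem
        have hex : ∃ x ∈ E, x ∉ T := by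
          by_contra h
          push_neg at h
          have := Finset.card_le_card h
          omega
        obtain ⟨x, hxE, hxT⟩ := hex
        have hxL : x ∈ E.toList := Finset.mem_toList.2 hxE
        obtain ⟨n, hn, hnx⟩ := List.getElem_of_mem hxL
        have hlen : E.toList.length = ℓ + 1 := by
          rw [Finset.length_toList, hEmem.2]
        have hnℓ : n ≤ ℓ := by omega
        refine ⟨⟨n, by omega⟩, ?_⟩
        show T ⊆ J \ {E.toList.getD (min n ℓ) a0}
        intro a haT
        have hmin : min n ℓ = n := by omega
        rw [Finset.mem_sdiff]
        refine ⟨hT haT, ?_⟩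
        simp only [hmin]
        rw [List.getD_eq_getElem _ _ (by omega), hnx]
        intro hax
        rw [Finset.mem_singleton] at hax
        exact hxT (hax ▸ haT)
      · intro h
        by_contra hTcard
        push_neg at hTcard
        obtain ⟨E₀, hE₀T, hE₀card⟩ := Finset.exists_subset_card_eq (show ℓ + 1 ≤ T.card by omega)
        have hE₀mem : E₀ ∈ Pcal :=
          Finset.mem_powersetCard.2 ⟨hE₀T.trans hT, hE₀card⟩
        obtain ⟨i, hi⟩ := h (e ⟨E₀, hE₀mem⟩)
        simp only [Equiv.symm_apply_apply] at hi
        have hlen : E₀.toList.length = ℓ + 1 := by rw [Finset.length_toList, hE₀card]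
        have hlt : min (i : ℕ) ℓ < E₀.toList.length := by omega
        set x := E₀.toList.getD (min i ℓ) a0 with hx
        have hxE₀ : x ∈ E₀ := by
          rw [← Finset.mem_toList, hx, List.getD_eq_getElem _ _ hlt]
          exact List.getElem_mem _
        have hxT : x ∈ T := hE₀T hxE₀
        have := hi hxT
        rw [Finset.mem_sdiff, Finset.mem_singleton] at this
        exact this.2 rfl
  · -- minimal infeasible sets
    intro E
    constructor
    · rintro ⟨hEJ, hEinf, hEmin⟩
      refine ⟨hEJ, ?_⟩
      rw [hfeas E hEJ] at hEinf
      push_neg at hEinf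
      by_contra hne
      have hgt : ℓ + 1 < E.card := by omega
      obtain ⟨E', hE'E, hE'card⟩ := Finset.exists_subset_card_eq hgt.le
      have hssub : E' ⊂ E := lt_of_le_of_ne hE'E (by
        intro h; rw [h] at hE'card; omega)
      have := hEmin E' hssub
      rw [hfeas E' (hE'E.trans hEJ)] at this
      omega
    · rintro ⟨hEJ, hEcard⟩
      refine ⟨hEJ, ?_, ?_⟩
      · rw [hfeas E hEJ]; omega
      · intro E' hE'
        have h1 : E' ⊆ J := hE'.subset.trans hEJ
        rw [hfeas E' h1]
        have := Finset.card_lt_card hE'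
        omega
end

section
/- Let 𝒮 be a combinatorial disjunctive constraint on finite ground set J that is pairwise IB-representable (every minimal infeasible set has cardinality 2). Let G^c_𝒮 = (J, Ē) be the conflict graph, whose edges are the infeasible pairs. If {(A^j, B^j)}_{j=1}^t is a biclique cover of G^c_𝒮, then setting L^j = J \ A^j and R^j = J \ B^j for each j gives a valid pairwise independent branching scheme: a set T ⊆ J is feasible if and only if for every j ∈ [t], T ⊆ L^j or T ⊆ R^j. -/
open Finset

/-- `{u,v}` is an edge of the conflict graph: an infeasible pair of distinct elements. -/
def ConflictEdge {α : Type*} [DecidableEq α] (J : Finset α) (𝒮 : Finset (Finset α))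
    (u v : α) : Prop :=
  u ∈ J ∧ v ∈ J ∧ u ≠ v ∧ ¬ Feasible 𝒮 ({u, v} : Finset α)

lemma exists_minInf {α : Type*} (J : Finset α) (𝒮 : Finset (Finset α)) :
    ∀ T : Finset α, T ⊆ J → ¬ Feasible 𝒮 T → ∃ E ⊆ T, MinInfeasible J 𝒮 E := by
  intro T
  induction T using Finset.strongInduction with
  | _ T ih =>
    intro hTJ hT
    by_cases h : ∀ E' ⊂ T, Feasible 𝒮 E'
    · exact ⟨T, Finset.Subset.refl T, hTJ, hT, h⟩
    · push_neg at h
      obtain ⟨E', hE'T, hE'⟩ := h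
      obtain ⟨E, hE, hmin⟩ := ih E' hE'T (hE'T.subset.trans hTJ) hE'
      exact ⟨E, hE.trans hE'T.subset, hmin⟩

/-- A biclique cover of the conflict graph yields a valid pairwise independent branching
scheme via `L^j = J \ A^j`, `R^j = J \ B^j`. -/
theorem stmt6 {α : Type*} [DecidableEq α] (J : Finset α) (𝒮 : Finset (Finset α))
    (hcover : ∀ v ∈ J, ∃ S ∈ 𝒮, v ∈ S)
    (hsubJ : ∀ S ∈ 𝒮, S ⊆ J)
    (hirr : ∀ S ∈ 𝒮, ∀ T ∈ 𝒮, S ⊆ T → S = T)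
    (hpair : ∀ E : Finset α, MinInfeasible J 𝒮 E → E.card = 2)
    (t : ℕ) (A B : Fin t → Finset α)
    (hA : ∀ j, A j ⊆ J) (hB : ∀ j, B j ⊆ J)
    (hne : ∀ j, (A j).Nonempty ∧ (B j).Nonempty)
    (hdisj : ∀ j, Disjoint (A j) (B j))
    (hbic : ∀ j, ∀ a ∈ A j, ∀ b ∈ B j, ConflictEdge J 𝒮 a b)
    (hcov : ∀ u v, ConflictEdge J 𝒮 u v →
      ∃ j, (u ∈ A j ∧ v ∈ B j) ∨ (v ∈ A j ∧ u ∈ B j)) :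
    ∀ T ⊆ J, (Feasible 𝒮 T ↔ ∀ j : Fin t, T ⊆ J \ A j ∨ T ⊆ J \ B j) := by
  intro T hTJ
  constructor
  · rintro ⟨S, hS, hTS⟩ j
    by_contra h
    push_neg at h
    obtain ⟨hnA, hnB⟩ := h
    obtain ⟨a, haT, ha⟩ := Finset.not_subset.mp hnA
    obtain ⟨b, hbT, hb⟩ := Finset.not_subset.mp hnB
    have haA : a ∈ A j := by
      by_contra hc; exact ha (Finset.mem_sdiff.mpr ⟨hTJ haT, hc⟩)
    have hbB : b ∈ B j := by
      by_contra hc; exact hb (Finset.mem_sdiff.mpr ⟨hTJ hbT, hc⟩)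
    obtain ⟨_, _, hab, hinf⟩ := hbic j a haA b hbB
    exact hinf ⟨S, hS, by
      intro x hx
      rcases Finset.mem_insert.mp hx with rfl | hx
      · exact hTS haT
      · exact hTS (Finset.mem_singleton.mp hx ▸ hbT)⟩
  · intro h
    by_contra hT
    obtain ⟨E, hET, hEJ, hEinf, hEmin⟩ := exists_minInf J 𝒮 T hTJ hT
    obtain ⟨u, v, huv, hE2⟩ := Finset.card_eq_two.mp (hpair E ⟨hEJ, hEinf, hEmin⟩)
    have huT : u ∈ T := hET (by simp [hE2])
    have hvT : v ∈ T := hET (by simp [hE2])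
    have hedge : ConflictEdge J 𝒮 u v :=
      ⟨hTJ huT, hTJ hvT, huv, by rw [← hE2]; exact hEinf⟩
    obtain ⟨j, hj⟩ := hcov u v hedge
    rcases h j with hL | hR
    · rcases hj with ⟨hu, _⟩ | ⟨hv, _⟩
      · exact (Finset.mem_sdiff.mp (hL huT)).2 hu
      · exact (Finset.mem_sdiff.mp (hL hvT)).2 hv
    · rcases hj with ⟨_, hv⟩ | ⟨_, hu⟩
      · exact (Finset.mem_sdiff.mp (hR hvT)).2 hv
      · exact (Finset.mem_sdiff.mp (hR huT)).2 hu
end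

section
/- Let 𝒮 be a pairwise IB-representable combinatorial disjunctive constraint on finite ground set J with conflict graph G^c_𝒮 = (J, Ē). If {(L^j, R^j)}_{j=1}^t is a pairwise independent branching scheme for 𝒮 (with L^j ∪ R^j = J for each j, which follows from the covering assumption), then setting A^j = J \ L^j and B^j = J \ R^j gives a biclique cover of G^c_𝒮. -/
open Finset

/-- A pairwise independent branching scheme `{(L^j,R^j)}` (with `L^j ∪ R^j = J`) yields a
biclique cover of the conflict graph via `A^j = J \ L^j`, `B^j = J \ R^j`. -/
theorem stmt7 {α : Type*} [DecidableEq α] (J : Finset α) (𝒮 : Finset (Finset α))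
    (hcover : ∀ v ∈ J, ∃ S ∈ 𝒮, v ∈ S)
    (hsubJ : ∀ S ∈ 𝒮, S ⊆ J)
    (hirr : ∀ S ∈ 𝒮, ∀ T ∈ 𝒮, S ⊆ T → S = T)
    (hpair : ∀ E : Finset α, MinInfeasible J 𝒮 E → E.card = 2)
    (t : ℕ) (L R : Fin t → Finset α)
    (hL : ∀ j, L j ⊆ J) (hR : ∀ j, R j ⊆ J)
    (hLR : ∀ j, L j ∪ R j = J)
    (hscheme : ∀ T ⊆ J, (Feasible 𝒮 T ↔ ∀ j : Fin t, T ⊆ L j ∨ T ⊆ R j)) :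
    (∀ j, Disjoint (J \ L j) (J \ R j)) ∧
    (∀ j, ∀ a ∈ J \ L j, ∀ b ∈ J \ R j, ConflictEdge J 𝒮 a b) ∧
    (∀ u v, ConflictEdge J 𝒮 u v →
      ∃ j, (u ∈ J \ L j ∧ v ∈ J \ R j) ∨ (v ∈ J \ L j ∧ u ∈ J \ R j)) := by

  have hmem : ∀ j, ∀ x ∈ J, x ∉ L j → x ∈ R j := by
    intro j x hxJ hxL
    have := (hLR j) ▸ hxJ
    rcases Finset.mem_union.mp this with h | h
    · exact absurd h hxL
    · exact h
  refine ⟨?_, ?_, ?_⟩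
  · intro j
    rw [Finset.disjoint_left]
    intro x hx hx'
    rcases Finset.mem_sdiff.mp hx with ⟨hxJ, hxL⟩
    exact (Finset.mem_sdiff.mp hx').2 (hmem j x hxJ hxL)
  · intro j a ha b hb
    rcases Finset.mem_sdiff.mp ha with ⟨haJ, haL⟩
    rcases Finset.mem_sdiff.mp hb with ⟨hbJ, hbR⟩
    have hne : a ≠ b := by
      rintro rfl
      exact hbR (hmem j a haJ haL)
    refine ⟨haJ, hbJ, hne, ?_⟩
    intro hfeas
    have hsub : ({a, b} : Finset α) ⊆ J := by
      intro x hx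
      rcases Finset.mem_insert.mp hx with rfl | hx
      · exact haJ
      · exact (Finset.mem_singleton.mp hx) ▸ hbJ
    rcases (hscheme _ hsub).mp hfeas j with h | h
    · exact haL (h (Finset.mem_insert_self a _))
    · exact hbR (h (Finset.mem_insert_of_mem (Finset.mem_singleton_self b)))
  · intro u v ⟨huJ, hvJ, hne, hnf⟩
    have hsub : ({u, v} : Finset α) ⊆ J := by
      intro x hx
      rcases Finset.mem_insert.mp hx with rfl | hx
      · exact huJ
      · exact (Finset.mem_singleton.mp hx) ▸ hvJ
    have : ¬ ∀ j : Fin t, ({u, v} : Finset α) ⊆ L j ∨ ({u, v} : Finset α) ⊆ R j := by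
      intro h; exact hnf ((hscheme _ hsub).mpr h)
    push_neg at this
    obtain ⟨j, hLj, hRj⟩ := this
    have hu : u ∈ ({u, v} : Finset α) := Finset.mem_insert_self u _
    have hv : v ∈ ({u, v} : Finset α) := Finset.mem_insert_of_mem (Finset.mem_singleton_self v)
    refine ⟨j, ?_⟩
    by_cases huL : u ∈ L j
    · have hvL : v ∉ L j := fun h => hLj (by
        intro x hx
        rcases Finset.mem_insert.mp hx with rfl | hx
        · exact huL
        · exact (Finset.mem_singleton.mp hx) ▸ h)
      have hvR : v ∈ R j := hmem j v hvJ hvL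
      have huR : u ∉ R j := fun h => hRj (by
        intro x hx
        rcases Finset.mem_insert.mp hx with rfl | hx
        · exact h
        · exact (Finset.mem_singleton.mp hx) ▸ hvR)
      exact Or.inr ⟨Finset.mem_sdiff.mpr ⟨hvJ, hvL⟩, Finset.mem_sdiff.mpr ⟨huJ, huR⟩⟩
    · have huR : u ∈ R j := hmem j u huJ huL
      have hvR : v ∉ R j := fun h => hRj (by
        intro x hx
        rcases Finset.mem_insert.mp hx with rfl | hx
        · exact huR
        · exact (Finset.mem_singleton.mp hx) ▸ h)
      exact Or.inl ⟨Finset.mem_sdiff.mpr ⟨huJ, huL⟩, Finset.mem_sdiff.mpr ⟨hvJ, hvR⟩⟩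
end

section
/- Let 𝒮 be an irredundant covering family of subsets of finite set J, and let G^c_𝒮 = (J, Ē) be the conflict graph whose edges are the infeasible pairs. Then 𝒮 is pairwise IB-representable (every minimal infeasible set has cardinality 2) if and only if the members of 𝒮 are exactly the maximal independent sets of G^c_𝒮. -/
open Finset

/-- `U` is an independent set of the conflict graph. -/
def GraphIndep {α : Type*} [DecidableEq α] (J : Finset α) (𝒮 : Finset (Finset α))
    (U : Finset α) : Prop :=
  U ⊆ J ∧ ∀ u ∈ U, ∀ v ∈ U, ¬ ConflictEdge J 𝒮 u v

/-! Both sides are equivalent to: every independent set of the conflict graph is feasible.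
An infeasible independent set would contain a minimal infeasible set that is not an edge;
conversely, a minimal infeasible set that is not a pair has all its pairs feasible, hence is
independent. Members of `𝒮` are independent, and once independent sets are feasible,
irredundancy makes them maximal and every maximal one is contained in, hence equal to, a member.
Conversely every independent set extends to a maximal one, which is a member of `𝒮`. -/

section ConflictGraph

variable {α : Type*} {J : Finset α} {𝒮 : Finset (Finset α)}

lemma exists_minInfeasible_subset {U : Finset α} (hUJ : U ⊆ J) (hU : ¬ Feasible 𝒮 U) :
    ∃ E ⊆ U, MinInfeasible J 𝒮 E := by
  obtain ⟨E, hEU, hE⟩ := exists_minimal_le_of_wellFoundedLT (fun T => ¬ Feasible 𝒮 T) U hU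
  exact ⟨E, hEU, hEU.trans hUJ, hE.prop, fun E' hE' => not_not.1 fun h => hE.not_prop_of_lt hE' h⟩

variable [DecidableEq α]

lemma graphIndep_of_mem (hsubJ : ∀ S ∈ 𝒮, S ⊆ J) {S : Finset α} (hS : S ∈ 𝒮) :
    GraphIndep J 𝒮 S :=
  ⟨hsubJ S hS, fun _ hu _ hv huv => huv.2.2.2 ⟨S, hS, insert_subset hu (singleton_subset_iff.2 hv)⟩⟩

lemma card_eq_two_of_minInfeasible (hfeas : ∀ U, GraphIndep J 𝒮 U → Feasible 𝒮 U)
    {E : Finset α} (hE : MinInfeasible J 𝒮 E) : E.card = 2 := by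
  by_contra hcard
  refine hE.2.1 (hfeas E ⟨hE.1, fun u hu v hv huv => huv.2.2.2 (hE.2.2 _ ?_)⟩)
  refine (insert_subset hu (singleton_subset_iff.2 hv)).ssubset_of_ne ?_
  rintro rfl
  exact hcard (card_pair huv.2.2.1)

theorem forall_minInfeasible_card_eq_two_iff :
    (∀ E, MinInfeasible J 𝒮 E → E.card = 2) ↔ ∀ U, GraphIndep J 𝒮 U → Feasible 𝒮 U := by
  refine ⟨fun hpair U hU => ?_, fun hfeas E => card_eq_two_of_minInfeasible hfeas⟩
  by_contra hinf
  obtain ⟨E, hEU, hE⟩ := exists_minInfeasible_subset hU.1 hinf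
  obtain ⟨u, v, huv, rfl⟩ := card_eq_two.1 (hpair E hE)
  have hu : u ∈ ({u, v} : Finset α) := mem_insert_self u {v}
  have hv : v ∈ ({u, v} : Finset α) := mem_insert_of_mem (mem_singleton_self v)
  exact hU.2 u (hEU hu) v (hEU hv) ⟨hE.1 hu, hE.1 hv, huv, hE.2.1⟩

lemma feasible_of_graphIndep_of_maximal (hmax : ∀ S, Maximal (GraphIndep J 𝒮) S → S ∈ 𝒮)
    {U : Finset α} (hU : GraphIndep J 𝒮 U) : Feasible 𝒮 U := by
  have hfin : {U | GraphIndep J 𝒮 U}.Finite :=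
    J.powerset.finite_toSet.subset fun U hU => mem_powerset.2 hU.1
  obtain ⟨M, hUM, hM⟩ := hfin.exists_le_maximal hU
  exact ⟨M, hmax M hM, hUM⟩

theorem mem_iff_maximal_graphIndep_iff (hsubJ : ∀ S ∈ 𝒮, S ⊆ J)
    (hirr : ∀ S ∈ 𝒮, ∀ T ∈ 𝒮, S ⊆ T → S = T) :
    (∀ S, S ∈ 𝒮 ↔ Maximal (GraphIndep J 𝒮) S) ↔ ∀ U, GraphIndep J 𝒮 U → Feasible 𝒮 U := by
  refine ⟨fun hmax U => feasible_of_graphIndep_of_maximal fun S => (hmax S).2,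
    fun hfeas S => ⟨fun hS => ⟨graphIndep_of_mem hsubJ hS, fun U hU hSU => ?_⟩, fun hS => ?_⟩⟩
  · obtain ⟨T, hT, hUT⟩ := hfeas U hU
    rwa [hirr S hS T hT (hSU.trans hUT)]
  · obtain ⟨T, hT, hST⟩ := hfeas S hS.prop
    rwa [hS.eq_of_le (graphIndep_of_mem hsubJ hT) hST]

end ConflictGraph

theorem stmt8_general {α : Type*} [DecidableEq α] (J : Finset α) (𝒮 : Finset (Finset α))
    (hsubJ : ∀ S ∈ 𝒮, S ⊆ J)
    (hirr : ∀ S ∈ 𝒮, ∀ T ∈ 𝒮, S ⊆ T → S = T) :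
    (∀ E : Finset α, MinInfeasible J 𝒮 E → E.card = 2) ↔
    (∀ S : Finset α, S ∈ 𝒮 ↔
      (GraphIndep J 𝒮 S ∧ ∀ U : Finset α, S ⊂ U → ¬ GraphIndep J 𝒮 U)) := by
  rw [forall_minInfeasible_card_eq_two_iff, ← mem_iff_maximal_graphIndep_iff hsubJ hirr]
  exact forall_congr' fun S => iff_congr Iff.rfl maximal_iff_forall_gt

/-- `CDC(𝒮)` is pairwise IB-representable iff the members of `𝒮` are exactly the maximal
independent sets of the conflict graph. -/
theorem stmt8 {α : Type*} [DecidableEq α] (J : Finset α) (𝒮 : Finset (Finset α))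
    (hcover : ∀ v ∈ J, ∃ S ∈ 𝒮, v ∈ S)
    (hsubJ : ∀ S ∈ 𝒮, S ⊆ J)
    (hirr : ∀ S ∈ 𝒮, ∀ T ∈ 𝒮, S ⊆ T → S = T) :
    (∀ E : Finset α, MinInfeasible J 𝒮 E → E.card = 2) ↔
    (∀ S : Finset α, S ∈ 𝒮 ↔
      (GraphIndep J 𝒮 S ∧ ∀ U : Finset α, S ⊂ U → ¬ GraphIndep J 𝒮 U)) :=
  stmt8_general J 𝒮 hsubJ hirr
end

section
/- Let {h^i}_{i=1}^{N−1} ⊆ {0,1}^m be a Gray code (a sequence of distinct binary vectors in which consecutive vectors differ in exactly one coordinate), with the conventions h^0 = h^1 and h^N = h^{N−1}. For j ∈ [m] define A^j = {τ ∈ [N] : h^{τ−1}_j = h^τ_j = 0} and B^j = {τ ∈ [N] : h^{τ−1}_j = h^τ_j = 1}. Then {(A^j, B^j)}_{j=1}^m is a biclique cover of the conflict graph of SOS2(N), whose edge set is {{r,s} : r + 2 ≤ s}: (i) for each j, A^j ∩ B^j = ∅ and every pair {a,b} with a ∈ A^j, b ∈ B^j satisfies |a − b| ≥ 2; and (ii)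 for every pair r + 2 ≤ s there exists j with (r ∈ A^j and s ∈ B^j) or (r ∈ B^j and s ∈ A^j). -/
open Finset

/-- A Gray code `h^1,…,h^{N-1} ∈ {0,1}^m` (distinct, consecutive codes differing in exactly
one coordinate, with conventions `h^0 = h^1`, `h^N = h^{N-1}`) yields a biclique cover of
the conflict graph of SOS2(N) (edges `{r,s}` with `r + 2 ≤ s`) via
`A^j = {τ : h^{τ-1}_j = h^τ_j = 0}` and `B^j = {τ : h^{τ-1}_j = h^τ_j = 1}`. -/
theorem stmt10 (N m : ℕ) (hN : 3 ≤ N) (h : ℕ → Fin m → Bool)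
    (hdistinct : ∀ i ∈ Icc 1 (N - 1), ∀ i' ∈ Icc 1 (N - 1), h i = h i' → i = i')
    (hgray : ∀ i ∈ Icc 1 (N - 2), ∃! j : Fin m, h i j ≠ h (i + 1) j)
    (h0 : h 0 = h 1) (hNconv : h N = h (N - 1))
    (A B : Fin m → Finset ℕ)
    (hA : ∀ j, A j = (Icc 1 N).filter (fun τ => h (τ - 1) j = false ∧ h τ j = false))
    (hB : ∀ j, B j = (Icc 1 N).filter (fun τ => h (τ - 1) j = true ∧ h τ j = true)) :
    (∀ j, Disjoint (A j) (B j) ∧ ∀ a ∈ A j, ∀ b ∈ B j, 2 ≤ Nat.dist a b) ∧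
    (∀ r s : ℕ, 1 ≤ r → r + 2 ≤ s → s ≤ N →
      ∃ j, (r ∈ A j ∧ s ∈ B j) ∨ (r ∈ B j ∧ s ∈ A j)) := by
  constructor
  · intro j
    constructor
    · rw [Finset.disjoint_left]
      intro a ha hb
      rw [hA j] at ha
      rw [hB j] at hb
      simp only [mem_filter] at ha hb
      rw [ha.2.2] at hb
      exact absurd hb.2.2 (by simp)
    · intro a ha b hb
      rw [hA j] at ha
      rw [hB j] at hb
      simp only [mem_filter, mem_Icc] at ha hb
      by_contra hlt
      push_neg at hlt
      simp only [Nat.dist] at hlt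
      rcases (by omega : a = b ∨ a = b + 1 ∨ b = a + 1) with h1 | h1 | h1
      · rw [h1, hb.2.2] at ha
        exact absurd ha.2.2 (by simp)
      · have : a - 1 = b := by omega
        rw [this, hb.2.2] at ha
        exact absurd ha.2.1 (by simp)
      · have hb1 := hb.2.1
        have : b - 1 = a := by omega
        rw [this, ha.2.2] at hb1
        exact absurd hb1 (by simp)
  · intro r s hr hrs hsN
    -- pairwise-distinctness helper
    have hdne : ∀ i i' : ℕ, 1 ≤ i → i' ≤ N - 1 → i < i' → h i ≠ h i' := by
      intro i i' h1 h2 h3 e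
      have := hdistinct i (mem_Icc.mpr ⟨h1, by omega⟩) i' (mem_Icc.mpr ⟨by omega, h2⟩) e
      omega
    -- shift boundary indices into range
    have hxr : ∃ r', 1 ≤ r' ∧ r' ≤ r ∧ h (r - 1) = h r' := by
      rcases Nat.eq_or_lt_of_le hr with e | l
      · refine ⟨1, le_rfl, hr, ?_⟩
        rw [← e]
        exact h0
      · exact ⟨r - 1, by omega, by omega, rfl⟩
    obtain ⟨r', hr'1, hr'2, hr'e⟩ := hxr
    have hxs : ∃ s', s - 1 ≤ s' ∧ s' ≤ N - 1 ∧ h s = h s' := by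
      rcases Nat.eq_or_lt_of_le hsN with e | l
      · refine ⟨N - 1, by omega, le_rfl, ?_⟩
        rw [e]
        exact hNconv
      · exact ⟨s, by omega, by omega, rfl⟩
    obtain ⟨s', hs'1, hs'2, hs'e⟩ := hxs
    -- the four distinctness facts
    have w_xy : h (r - 1) ≠ h (s - 1) := by
      rw [hr'e]; exact hdne r' (s - 1) hr'1 (by omega) (by omega)
    have w_xY : h (r - 1) ≠ h s := by
      rw [hr'e, hs'e]; exact hdne r' s' hr'1 hs'2 (by omega)
    have w_Xy : h r ≠ h (s - 1) := hdne r (s - 1) hr (by omega) (by omega)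
    have w_XY : h r ≠ h s := by
      rw [hs'e]; exact hdne r s' hr hs'2 (by omega)
    -- stability: unique possible flip coordinate at transitions r-1 → r and s-1 → s
    have hstabr : ∃ a : Fin m, ∀ j, h (r - 1) j ≠ h r j → j = a := by
      rcases Nat.eq_or_lt_of_le hr with e | l
      · obtain ⟨j0, -⟩ := Function.ne_iff.mp w_XY
        refine ⟨j0, fun j hj => absurd ?_ hj⟩
        rw [← e]
        exact congrFun h0 j
      · obtain ⟨a, -, ha⟩ := hgray (r - 1) (mem_Icc.mpr ⟨by omega, by omega⟩)
        refine ⟨a, fun j hj => ha j ?_⟩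
        rwa [(by omega : r - 1 + 1 = r)]
    have hstabs : ∃ b : Fin m, ∀ j, h (s - 1) j ≠ h s j → j = b := by
      rcases Nat.eq_or_lt_of_le hsN with e | l
      · obtain ⟨j0, -⟩ := Function.ne_iff.mp w_XY
        refine ⟨j0, fun j hj => absurd ?_ hj⟩
        rw [e]
        exact (congrFun hNconv j).symm
      · obtain ⟨b, -, hb⟩ := hgray (s - 1) (mem_Icc.mpr ⟨by omega, by omega⟩)
        refine ⟨b, fun j hj => hb j ?_⟩
        rwa [(by omega : s - 1 + 1 = s)]
    obtain ⟨a, hstA⟩ := hstabr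
    obtain ⟨b, hstB⟩ := hstabs
    -- key claim
    have key : ∃ j, h (r - 1) j = h r j ∧ h (s - 1) j = h s j ∧ h r j ≠ h s j := by
      by_contra hcon
      push_neg at hcon
      -- hcon : ∀ j, h (r-1) j = h r j → h (s-1) j = h s j → h r j = h s j
      obtain ⟨j1, hj1⟩ := Function.ne_iff.mp w_xy
      obtain ⟨j2, hj2⟩ := Function.ne_iff.mp w_xY
      obtain ⟨j3, hj3⟩ := Function.ne_iff.mp w_Xy
      obtain ⟨j4, hj4⟩ := Function.ne_iff.mp w_XY
      have hmem : ∀ j : Fin m, j ≠ a → j ≠ b →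
          (h (r - 1) j = h r j ∧ h (s - 1) j = h s j ∧ h r j = h s j) := by
        intro j hja hjb
        have h1 : h (r - 1) j = h r j := by
          by_contra hc; exact hja (hstA j hc)
        have h2 : h (s - 1) j = h s j := by
          by_contra hc; exact hjb (hstB j hc)
        exact ⟨h1, h2, hcon j h1 h2⟩
      have k1 : j1 = a ∨ j1 = b := by
        by_contra hc; push_neg at hc
        obtain ⟨e1, e2, e3⟩ := hmem j1 hc.1 hc.2
        exact hj1 (by rw [e1, e3, ← e2])
      have k2 : j2 = a ∨ j2 = b := by
        by_contra hc; push_neg at hc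
        obtain ⟨e1, e2, e3⟩ := hmem j2 hc.1 hc.2
        exact hj2 (by rw [e1, e3])
      have k3 : j3 = a ∨ j3 = b := by
        by_contra hc; push_neg at hc
        obtain ⟨e1, e2, e3⟩ := hmem j3 hc.1 hc.2
        exact hj3 (by rw [e3, ← e2])
      have k4 : j4 = a ∨ j4 = b := by
        by_contra hc; push_neg at hc
        obtain ⟨e1, e2, e3⟩ := hmem j4 hc.1 hc.2
        exact hj4 e3
      rcases eq_or_ne a b with hab | hab
      · subst hab
        have e1 : j1 = a := k1.elim id id
        have e2 : j2 = a := k2.elim id id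
        have e3 : j3 = a := k3.elim id id
        have e4 : j4 = a := k4.elim id id
        rw [e1] at hj1; rw [e2] at hj2; rw [e3] at hj3; rw [e4] at hj4
        have hca := hcon a
        revert hca hj1 hj2 hj3 hj4
        generalize h (r - 1) a = p
        generalize h r a = q
        generalize h (s - 1) a = u
        generalize h s a = v
        revert p q u v
        decide
      · -- a ≠ b : cross-stability
        have sA : h (s - 1) a = h s a := by
          by_contra hc; exact hab (hstB a hc)
        have sB : h (r - 1) b = h r b := by
          by_contra hc; exact hab ((hstA b hc).symm)
        have d1 : h (r - 1) a ≠ h (s - 1) a ∨ h (r - 1) b ≠ h (s - 1) b :=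
          k1.elim (fun e => Or.inl (e ▸ hj1)) (fun e => Or.inr (e ▸ hj1))
        have d2 : h (r - 1) a ≠ h s a ∨ h (r - 1) b ≠ h s b :=
          k2.elim (fun e => Or.inl (e ▸ hj2)) (fun e => Or.inr (e ▸ hj2))
        have d3 : h r a ≠ h (s - 1) a ∨ h r b ≠ h (s - 1) b :=
          k3.elim (fun e => Or.inl (e ▸ hj3)) (fun e => Or.inr (e ▸ hj3))
        have d4 : h r a ≠ h s a ∨ h r b ≠ h s b :=
          k4.elim (fun e => Or.inl (e ▸ hj4)) (fun e => Or.inr (e ▸ hj4))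
        have hca := hcon a
        have hcb := hcon b
        revert hca hcb sA sB d1 d2 d3 d4
        generalize h (r - 1) a = p
        generalize h r a = q
        generalize h (s - 1) a = u
        generalize h s a = v
        generalize h (r - 1) b = p'
        generalize h r b = q'
        generalize h (s - 1) b = u'
        generalize h s b = v'
        revert p q u v p' q' u' v'
        decide
    obtain ⟨j, hjr, hjs, hjne⟩ := key
    refine ⟨j, ?_⟩
    have hrmem : r ∈ Icc 1 N := mem_Icc.mpr ⟨hr, by omega⟩
    have hsmem : s ∈ Icc 1 N := mem_Icc.mpr ⟨by omega, hsN⟩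
    cases hb0 : h r j with
    | false =>
      have hb1 : h s j = true := by
        cases hb2 : h s j
        · exact absurd (hb0.trans hb2.symm) hjne
        · rfl
      left
      constructor
      · rw [hA j]
        exact mem_filter.mpr ⟨hrmem, by rw [hjr, hb0]; exact ⟨rfl, rfl⟩⟩
      · rw [hB j]
        exact mem_filter.mpr ⟨hsmem, by rw [hjs, hb1]; exact ⟨rfl, rfl⟩⟩
    | true =>
      have hb1 : h s j = false := by
        cases hb2 : h s j
        · rfl
        · exact absurd (hb0.trans hb2.symm) hjne
      right
      constructor
      · rw [hB j]
        exact mem_filter.mpr ⟨hrmem, by rw [hjr, hb0]; exact ⟨rfl, rfl⟩⟩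
      · rw [hA j]
        exact mem_filter.mpr ⟨hsmem, by rw [hjs, hb1]; exact ⟨rfl, rfl⟩⟩
end

section
/- Let {G^i = (J^i, E^i)}_{i=1}^η be finite graphs, and let the disjunctive graph product ∨_i G^i have vertex set ∏_i J^i and edges {u,v} whenever there exists i with {u_i, v_i} ∈ E^i. If for each i, {(Ã^{i,j}, B̃^{i,j})}_{j=1}^{t_i} is a biclique cover of G^i, then the family {(A^{i,j}, B^{i,j})} over all i ∈ [η], j ∈ [t_i], where A^{i,j} = {x ∈ ∏_ℓ J^ℓ : x_i ∈ Ã^{i,j}} and B^{i,j} = {x : x_i ∈ B̃^{i,j}}, is a biclique cover of ∨_i G^i. -/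
/-- Biclique covers of the factor graphs lift to a biclique cover of the disjunctive graph
product (vertices: tuples; adjacency: adjacency in some coordinate). -/
theorem stmt12 {η : ℕ} (V : Fin η → Type*) [∀ i, Fintype (V i)] [∀ i, Nonempty (V i)]
    (G : ∀ i, SimpleGraph (V i))
    (t : Fin η → ℕ) (A B : ∀ i, Fin (t i) → Set (V i))
    (hne : ∀ i j, (A i j).Nonempty ∧ (B i j).Nonempty)
    (hdisj : ∀ i j, Disjoint (A i j) (B i j))
    (hbic : ∀ i j, ∀ a ∈ A i j, ∀ b ∈ B i j, (G i).Adj a b)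
    (hcov : ∀ i, ∀ u v : V i, (G i).Adj u v →
      ∃ j, (u ∈ A i j ∧ v ∈ B i j) ∨ (v ∈ A i j ∧ u ∈ B i j)) :
    (∀ i (j : Fin (t i)),
      ({x : ∀ ℓ, V ℓ | x i ∈ A i j} : Set _).Nonempty ∧
      ({x : ∀ ℓ, V ℓ | x i ∈ B i j} : Set _).Nonempty) ∧
    (∀ i (j : Fin (t i)),
      Disjoint ({x : ∀ ℓ, V ℓ | x i ∈ A i j} : Set _) {x : ∀ ℓ, V ℓ | x i ∈ B i j}) ∧
    (∀ i (j : Fin (t i)), ∀ x y : ∀ ℓ, V ℓ, x i ∈ A i j → y i ∈ B i j →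
      ∃ ℓ, (G ℓ).Adj (x ℓ) (y ℓ)) ∧
    (∀ x y : ∀ ℓ, V ℓ, (∃ ℓ, (G ℓ).Adj (x ℓ) (y ℓ)) →
      ∃ i, ∃ j : Fin (t i), (x i ∈ A i j ∧ y i ∈ B i j) ∨ (y i ∈ A i j ∧ x i ∈ B i j)) := by
  refine ⟨?_, ?_, ?_, ?_⟩
  · intro i j
    obtain ⟨⟨a, ha⟩, ⟨b, hb⟩⟩ := hne i j
    exact ⟨⟨Function.update (fun ℓ => Classical.arbitrary (V ℓ)) i a, by
      simp [Set.mem_setOf_eq]; exact ha⟩,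
      ⟨Function.update (fun ℓ => Classical.arbitrary (V ℓ)) i b, by
      simp [Set.mem_setOf_eq]; exact hb⟩⟩
  · intro i j
    rw [Set.disjoint_left]
    intro x hx hx'
    exact Set.disjoint_left.mp (hdisj i j) hx hx'
  · intro i j x y hx hy
    exact ⟨i, hbic i j _ hx _ hy⟩
  · rintro x y ⟨ℓ, h⟩
    obtain ⟨j, hj⟩ := hcov ℓ _ _ h
    exact ⟨ℓ, j, hj⟩
end

section
/- Let J = [M] × [N] and let Ē be the edge set of the conflict graph of a grid triangulation of [1,M]×[1,N] (so {u,v} ∈ Ē implies in particular no triangle of the triangulation contains both u and v; every pair with ‖u−v‖_∞ ≥ 2 is in Ē). For w ∈ J define A(w) = {w} and B(w) = {w + v : v ∈ {−1,1}², {w, w+v} ∈ Ē}. Then for any u ∈ J, the pair (⋃_{w ∈ J ∩ (u + 3ℤ²)} A(w), ⋃_{w ∈ J ∩ (u + 3ℤ²)} B(w)) is a biclique of the conflict graph. -/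
open Finset

/-- The conflict-graph edge relation of a grid triangulation `𝒮` on the grid
`J = [M] × [N] ⊆ ℤ²`: distinct grid points not contained in a common triangle. -/
def GridEdge (J : Finset (ℤ × ℤ)) (𝒮 : Finset (Finset (ℤ × ℤ))) (u v : ℤ × ℤ) : Prop :=
  u ∈ J ∧ v ∈ J ∧ u ≠ v ∧ ¬ ∃ S ∈ 𝒮, u ∈ S ∧ v ∈ S

/-- Stitching stars at grid points congruent mod 3: for a grid triangulation, the pair
`(⋃_{w ≡ u₀ (mod 3)} {w}, ⋃_{w ≡ u₀ (mod 3)} B(w))`, where `B(w)` are the diagonal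
neighbors `w + v`, `v ∈ {-1,1}²`, with `{w, w+v}` an edge, is a biclique of the conflict
graph. -/
theorem stmt15 (M N : ℕ) (hM : 1 ≤ M) (hN : 1 ≤ N)
    (J : Finset (ℤ × ℤ)) (hJ : J = Finset.Icc (1 : ℤ) M ×ˢ Finset.Icc (1 : ℤ) N)
    (𝒮 : Finset (Finset (ℤ × ℤ)))
    (htri : ∀ S ∈ 𝒮, S.card = 3 ∧ S ⊆ J ∧
      ∀ v ∈ S, ∀ w ∈ S, |v.1 - w.1| ≤ 1 ∧ |v.2 - w.2| ≤ 1)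
    (u₀ : ℤ × ℤ) (hu₀ : u₀ ∈ J) :
    Disjoint ({w : ℤ × ℤ | w ∈ J ∧ (3 : ℤ) ∣ (w.1 - u₀.1) ∧ (3 : ℤ) ∣ (w.2 - u₀.2)} : Set (ℤ × ℤ))
      {b : ℤ × ℤ | ∃ w : ℤ × ℤ,
        (w ∈ J ∧ (3 : ℤ) ∣ (w.1 - u₀.1) ∧ (3 : ℤ) ∣ (w.2 - u₀.2)) ∧
        ∃ v : ℤ × ℤ, (v.1 = 1 ∨ v.1 = -1) ∧ (v.2 = 1 ∨ v.2 = -1) ∧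
          b = w + v ∧ GridEdge J 𝒮 w b} ∧
    ∀ a ∈ ({w : ℤ × ℤ | w ∈ J ∧ (3 : ℤ) ∣ (w.1 - u₀.1) ∧ (3 : ℤ) ∣ (w.2 - u₀.2)} : Set (ℤ × ℤ)),
      ∀ b ∈ {b : ℤ × ℤ | ∃ w : ℤ × ℤ,
        (w ∈ J ∧ (3 : ℤ) ∣ (w.1 - u₀.1) ∧ (3 : ℤ) ∣ (w.2 - u₀.2)) ∧
        ∃ v : ℤ × ℤ, (v.1 = 1 ∨ v.1 = -1) ∧ (v.2 = 1 ∨ v.2 = -1) ∧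
          b = w + v ∧ GridEdge J 𝒮 w b},
      GridEdge J 𝒮 a b := by
  constructor
  · rw [Set.disjoint_left]
    rintro a ⟨haJ, ha1, ha2⟩ ⟨w, ⟨hwJ, hw1, hw2⟩, v, hv1, hv2, hb, hedge⟩
    have hb1 : a.1 = w.1 + v.1 := by rw [hb]; rfl
    rcases hv1 with h | h <;> omega
  · rintro a ⟨haJ, ha1, ha2⟩ b ⟨w, ⟨hwJ, hw1, hw2⟩, v, hv1, hv2, hb, hedge⟩
    by_cases hab : a = w
    · subst hab; exact hedge
    have hb1 : b.1 = w.1 + v.1 := by rw [hb]; rfl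
    have hb2 : b.2 = w.2 + v.2 := by rw [hb]; rfl
    have hne : a.1 ≠ w.1 ∨ a.2 ≠ w.2 := by
      by_contra h; push_neg at h; exact hab (Prod.ext h.1 h.2)
    refine ⟨haJ, hedge.2.1, ?_, ?_⟩
    · intro h
      have h1 : a.1 = b.1 := by rw [h]
      have h2 : a.2 = b.2 := by rw [h]
      rcases hv1 with hv1 | hv1 <;> rcases hv2 with hv2 | hv2 <;>
        rcases hne with hne | hne <;> omega
    · rintro ⟨S, hS, haS, hbS⟩
      obtain ⟨-, -, hdiam⟩ := htri S hS
      obtain ⟨h1, h2⟩ := hdiam a haS b hbS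
      rw [abs_le] at h1 h2
      rcases hv1 with hv1 | hv1 <;> rcases hv2 with hv2 | hv2 <;>
        rcases hne with hne | hne <;> omega
end

section
/- Fix integers k ≤ N with k | N. Let G¹ = ([N/k], E¹) be the conflict graph of SOS2(N/k) (edges {m,m'} with |m − m'| ≥ 2) and let G² be the empty graph on {0,…,k−1}. Then the disjunctive graph product G¹ ∨ G² is isomorphic, via f(u) = (⌊u/k⌋, u mod k) on an appropriate indexing, to a subgraph Ĝ = ([N], Ê) of the conflict graph of SOSk(N) (edges {u,v} with |u−v| ≥ k+1), such that Ê is contained in the SOSk conflict edge set and every pair {u,v} with |u − v| ≥ 2k belongs to Ê. -/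
open Finset

/-- The disjunctive product of the SOS2(N/k) conflict graph with the empty graph on `k`
nodes is isomorphic, via `u ↦ (u / k, u % k)`, to a subgraph of the SOSk(N) conflict graph
(edges at distance `≥ k + 1`) that contains every pair at distance `≥ 2k`. -/
theorem stmt16 (N k : ℕ) (hk : 0 < k) (hkN : k ≤ N) (hdvd : k ∣ N) :
    Set.BijOn (fun u : ℕ => (u / k, u % k)) {u | u < N}
      (({q | q < N / k} : Set ℕ) ×ˢ ({r | r < k} : Set ℕ)) ∧
    (∀ u < N, ∀ v < N, 2 ≤ Nat.dist (u / k) (v / k) → k + 1 ≤ Nat.dist u v) ∧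
    (∀ u < N, ∀ v < N, 2 * k ≤ Nat.dist u v → 2 ≤ Nat.dist (u / k) (v / k)) := by
  have hNk : N / k * k = N := Nat.div_mul_cancel hdvd
  refine ⟨⟨?_, ?_, ?_⟩, ?_, ?_⟩
  · intro u hu
    refine ⟨?_, Nat.mod_lt _ hk⟩
    simp only [Set.mem_setOf_eq] at hu ⊢
    exact Nat.div_lt_div_of_lt_of_dvd hdvd hu
  · intro u _ v _ h
    have h1 := Nat.div_add_mod u k
    have h2 := Nat.div_add_mod v k
    have hq : u / k = v / k := congrArg Prod.fst h
    have hr : u % k = v % k := congrArg Prod.snd h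
    rw [hq, hr] at h1
    omega
  · rintro ⟨q, r⟩ ⟨hq, hr⟩
    simp only [Set.mem_setOf_eq] at hq hr
    refine ⟨q * k + r, ?_, ?_⟩
    · have h1 : q * k + r < (q + 1) * k := by rw [add_mul]; omega
      have h2 : (q + 1) * k ≤ N / k * k := Nat.mul_le_mul_right _ hq
      simp only [Set.mem_setOf_eq]; omega
    · have hdiv : (q * k + r) / k = q := by
        rw [add_comm, Nat.add_mul_div_right _ _ hk, Nat.div_eq_of_lt hr]; omega
      have hmod : (q * k + r) % k = r := by
        rw [add_comm, Nat.add_mul_mod_self_right, Nat.mod_eq_of_lt hr]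
      simp [hdiv, hmod]
  · intro u hu v hv h
    have h1 := Nat.div_add_mod' u k
    have h2 := Nat.div_add_mod' v k
    have hb := Nat.mod_lt u hk
    have hd := Nat.mod_lt v hk
    simp only [Nat.dist] at h ⊢
    rcases Nat.le_total (u / k) (v / k) with hle | hle
    · have h3 : (u / k + 2) * k ≤ (v / k) * k := Nat.mul_le_mul_right _ (by omega)
      have h4 : (u / k + 2) * k = u / k * k + 2 * k := by ring
      omega
    · have h3 : (v / k + 2) * k ≤ (u / k) * k := Nat.mul_le_mul_right _ (by omega)
      have h4 : (v / k + 2) * k = v / k * k + 2 * k := by ring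
      omega
  · intro u hu v hv h
    have h1 := Nat.div_add_mod' u k
    have h2 := Nat.div_add_mod' v k
    have hb := Nat.mod_lt u hk
    have hd := Nat.mod_lt v hk
    simp only [Nat.dist] at h ⊢
    rcases Nat.le_total u v with hle | hle
    · have hq : u / k ≤ v / k := Nat.div_le_div_right hle
      rcases Nat.lt_or_ge (v / k) (u / k + 2) with hc | hc
      · have h3 : (v / k) * k ≤ (u / k + 1) * k := Nat.mul_le_mul_right _ (by omega)
        have h4 : (u / k + 1) * k = u / k * k + k := by ring
        omega
      · omega
    · have hq : v / k ≤ u / k := Nat.div_le_div_right hle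
      rcases Nat.lt_or_ge (u / k) (v / k + 2) with hc | hc
      · have h3 : (u / k) * k ≤ (v / k + 1) * k := Nat.mul_le_mul_right _ (by omega)
        have h4 : (v / k + 1) * k = v / k * k + k := by ring
        omega
      · omega
end

section
/- Let J = [N], k ≤ N, and let Ē = {{u,v} : |u − v| ≥ k+1} be the conflict-graph edge set of SOSk(N). For w ∈ J define A(w) = {w} and B(w) = {u ∈ J : k+1 ≤ |u−w| ≤ 2k−1}. Then for any u ∈ J, the pair (⋃_{w ∈ J ∩ (u+3kℤ)} A(w), ⋃_{w ∈ J ∩ (u+3kℤ)} B(w)) is a biclique of the conflict graph of SOSk(N). -/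
/-- The `A`-side of the stitched star biclique for SOSk(N): the points of `{1,…,N}`
congruent to `u₀` modulo `3k`. -/
def sosAA (N k : ℕ) (u₀ : ℤ) : Set ℤ :=
  {w | w ∈ Finset.Icc (1 : ℤ) N ∧ (3 * (k : ℤ)) ∣ (w - u₀)}

/-- The `B`-side: points at distance between `k + 1` and `2k - 1` from some center. -/
def sosBB (N k : ℕ) (u₀ : ℤ) : Set ℤ :=
  {b | ∃ w ∈ sosAA N k u₀, b ∈ Finset.Icc (1 : ℤ) N ∧
    (k : ℤ) + 1 ≤ |b - w| ∧ |b - w| ≤ 2 * (k : ℤ) - 1}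

/-- Stitching stars centered at points of `u₀ + 3kℤ` yields a biclique of the conflict
graph of SOSk(N), whose edges are the pairs at distance `≥ k + 1`. -/
theorem stmt17 (N k : ℕ) (hk : 0 < k) (hkN : k ≤ N)
    (u₀ : ℤ) (hu₀ : u₀ ∈ Finset.Icc (1 : ℤ) N) :
    Disjoint (sosAA N k u₀) (sosBB N k u₀) ∧
    ∀ a ∈ sosAA N k u₀, ∀ b ∈ sosBB N k u₀,
      a ∈ Finset.Icc (1 : ℤ) N ∧ b ∈ Finset.Icc (1 : ℤ) N ∧ (k : ℤ) + 1 ≤ |a - b| := by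
  have hk' : (1 : ℤ) ≤ k := by exact_mod_cast hk
  constructor
  · rw [Set.disjoint_left]
    rintro a ⟨haI, hda⟩ ⟨w, ⟨hwI, hdw⟩, hbI, h1, h2⟩
    have hd : (3 * (k : ℤ)) ∣ (a - w) := by
      have := dvd_sub hda hdw
      simpa using this
    have hd' : (3 * (k : ℤ)) ∣ |a - w| := (dvd_abs _ _).mpr hd
    have hpos : 0 < |a - w| := by
      linarith
    have h3 : 3 * (k : ℤ) ≤ |a - w| := Int.le_of_dvd hpos hd'
    linarith
  · rintro a ⟨haI, hda⟩ b ⟨w, ⟨hwI, hdw⟩, hbI, h1, h2⟩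
    refine ⟨haI, hbI, ?_⟩
    have hd : (3 * (k : ℤ)) ∣ (a - w) := by
      have := dvd_sub hda hdw
      simpa using this
    rcases eq_or_ne a w with rfl | hne
    · rw [abs_sub_comm] at h1; simpa using h1
    · have hd' : (3 * (k : ℤ)) ∣ |a - w| := (dvd_abs _ _).mpr hd
      have hpos : 0 < |a - w| := abs_pos.mpr (sub_ne_zero.mpr hne)
      have h3 : 3 * (k : ℤ) ≤ |a - w| := Int.le_of_dvd hpos hd'
      have htri : |a - w| ≤ |a - b| + |b - w| := by
        calc |a - w| = |(a - b) + (b - w)| := by ring_nf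
          _ ≤ |a - b| + |b - w| := abs_add_le _ _
      linarith
end

section
/- Let the conflict graph of SOSk(N) have vertex set [N], where a pair {r,s} with r<s is an edge iff s − r ≥ k. Then any biclique cover of this graph has depth at least γ = min{k, N−k}: the γ edges {τ, τ+k} for τ ∈ [γ] are such that no single biclique in the cover can contain two distinct ones, hence the cover has at least γ levels. -/
open Finset

/-- Lower bound: any biclique cover of the conflict graph of SOSk(N) (vertices `{1,…,N}`,
edges the pairs `{r,s}` with `|r - s| ≥ k`) has depth at least `min {k, N - k}`. -/
theorem stmt18 (N k t : ℕ) (hk : 0 < k) (hkN : k < N)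
    (A B : Fin t → Finset ℕ)
    (hsub : ∀ j, A j ⊆ Icc 1 N ∧ B j ⊆ Icc 1 N)
    (hdisj : ∀ j, Disjoint (A j) (B j))
    (hbic : ∀ j, ∀ a ∈ A j, ∀ b ∈ B j, k ≤ Nat.dist a b)
    (hcov : ∀ r ∈ Icc 1 N, ∀ s ∈ Icc 1 N, k ≤ Nat.dist r s →
      ∃ j, (r ∈ A j ∧ s ∈ B j) ∨ (s ∈ A j ∧ r ∈ B j)) :
    min k (N - k) ≤ t := by
  classical
  set γ := min k (N - k) with hγ
  have hγk : γ ≤ k := min_le_left _ _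
  have hγN : γ ≤ N - k := min_le_right _ _
  have hγ1 : 1 ≤ γ := le_min hk (by omega)
  have hedge : ∀ τ, 1 ≤ τ → τ ≤ γ →
      ∃ j, (τ ∈ A j ∧ τ + k ∈ B j) ∨ (τ + k ∈ A j ∧ τ ∈ B j) := by
    intro τ h1 h2
    refine hcov τ (by simp only [mem_Icc]; omega) (τ + k) (by simp only [mem_Icc]; omega) ?_
    simp only [Nat.dist]; omega
  obtain ⟨j0, _⟩ := hedge 1 le_rfl hγ1
  have ht : 0 < t := j0.pos
  let f : ℕ → Fin t := fun τ =>
    if h : ∃ j, (τ ∈ A j ∧ τ + k ∈ B j) ∨ (τ + k ∈ A j ∧ τ ∈ B j) then h.choose else ⟨0, ht⟩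
  have hf : ∀ τ, 1 ≤ τ → τ ≤ γ →
      (τ ∈ A (f τ) ∧ τ + k ∈ B (f τ)) ∨ (τ + k ∈ A (f τ) ∧ τ ∈ B (f τ)) := by
    intro τ h1 h2
    have h := hedge τ h1 h2
    simp only [f, dif_pos h]
    exact h.choose_spec
  have key : ∀ τ τ', 1 ≤ τ → τ ≤ γ → 1 ≤ τ' → τ' ≤ γ → τ < τ' → f τ ≠ f τ' := by
    intro τ τ' h1 h2 h1' h2' hlt heq
    have hτ := hf τ h1 h2
    have hτ' := hf τ' h1' h2'
    rw [heq] at hτ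
    set j := f τ' with hj
    have hd1 : Nat.dist τ τ' < k := by simp only [Nat.dist]; omega
    have hd2 : Nat.dist τ' (τ + k) < k := by simp only [Nat.dist]; omega
    have hd3 : Nat.dist (τ + k) τ' < k := by simp only [Nat.dist]; omega
    have hd4 : Nat.dist τ' τ < k := by simp only [Nat.dist]; omega
    rcases hτ with ⟨ha, hb⟩ | ⟨ha, hb⟩ <;> rcases hτ' with ⟨ha', hb'⟩ | ⟨ha', hb'⟩
    · exact absurd (hbic j τ' ha' (τ + k) hb) (by omega)
    · exact absurd (hbic j τ ha τ' hb') (by omega)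
    · exact absurd (hbic j τ' ha' τ hb) (by omega)
    · exact absurd (hbic j (τ + k) ha τ' hb') (by omega)
  have hinj : Set.InjOn f (Icc 1 γ) := by
    intro x hx y hy hxy
    simp only [coe_Icc, Set.mem_Icc] at hx hy
    by_contra hne
    rcases Nat.lt_or_ge x y with h | h
    · exact key x y hx.1 hx.2 hy.1 hy.2 h hxy
    · exact key y x hy.1 hy.2 hx.1 hx.2 (by omega) hxy.symm
  have := Finset.card_le_card_of_injOn f (fun x _ => mem_univ (f x)) hinj
  simpa [Nat.card_Icc] using this
end

section
/- Let Ω ⊂ ℝ² be bounded and let {P^i}_{i=1}^d be a polyhedral partition of Ω (each P^i a polytope, ⋃ P^i = Ω, relative interiors pairwise disjoint) satisfying the internal-vertex condition: for every i and every v ∈ J := ⋃_i ext(P^i), v ∈ P^i implies v ∈ ext(P^i). With 𝒮 = {ext(P^i)}_{i=1}^d and feasibility of T ⊆ J meaning T ⊆ ext(P^i) for some i, every minimal infeasible set has cardinality at most 3. -/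
/-!
Let `T` be minimal infeasible. For `v ∈ T` the set `T \ {v}` consists of vertices of some cell
`P i`, and `v ∉ P i`, since otherwise the internal-vertex condition makes `v` a vertex of `P i` and
`T` feasible. By convexity `conv (T \ {v}) ⊆ P i`, so `T` is in convex position, and distinct
points `v` give distinct cells. If `T` had four points, their Radon partition would consist of two
crossing diagonals `[a, b]`, `[c, e]` meeting at `z`; the nondegenerate triangle `a c z` lies in
both `conv {a, b, c}` and `conv {a, c, e}`, so the interiors of two distinct cells would meet.
-/

open Set Module

section ConvexIndependent

variable {ι 𝕜 E : Type*} [Field 𝕜] [LinearOrder 𝕜] [AddCommGroup E] [Module 𝕜 E] {p : ι → E}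

theorem ConvexIndependent.not_collinear [IsStrictOrderedRing 𝕜] (hp : ConvexIndependent 𝕜 p)
    {i j k : ι} (hij : i ≠ j) (hjk : j ≠ k) (hik : i ≠ k) : ¬ Collinear 𝕜 {p i, p j, p k} := by
  have hnot_wbtw : ∀ {u v w : ι}, u ≠ w → v ≠ w → ¬ Wbtw 𝕜 (p u) (p w) (p v) := by
    intro u v w hu hv h
    have hw := hp {u, v} w (by rw [image_pair, convexHull_pair]; exact h.mem_segment)
    rcases hw with rfl | rfl
    exacts [hu rfl, hv rfl]
  intro h
  rcases h.wbtw_or_wbtw_or_wbtw with h | h | h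
  · exact hnot_wbtw hij hjk.symm h
  · exact hnot_wbtw hjk hik h
  · exact hnot_wbtw hik.symm hij.symm h

theorem ConvexIndependent.nontrivial_of_mem_convexHull_inter (hp : ConvexIndependent 𝕜 p)
    {I : Set ι} {z : E} (hz : z ∈ convexHull 𝕜 (p '' I) ∩ convexHull 𝕜 (p '' Iᶜ)) :
    I.Nontrivial := by
  have hI : I.Nonempty := by
    by_contra! h
    simp [h] at hz
  rcases hI.exists_eq_singleton_or_nontrivial with ⟨k, rfl⟩ | h
  · rw [image_singleton, convexHull_singleton] at hz
    obtain ⟨rfl, hz⟩ := hz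
    exact absurd (hp _ k hz) (by simp)
  · exact h

theorem not_collinear_of_mem_segment [IsStrictOrderedRing 𝕜] {a b c z : E}
    (hz : z ∈ segment 𝕜 a b) (hza : z ≠ a) (h : ¬ Collinear 𝕜 {a, b, c}) :
    ¬ Collinear 𝕜 {a, c, z} := by
  intro hc
  have hb : b ∈ line[𝕜, a, z] :=
    (mem_segment_iff_wbtw.1 hz).collinear.mem_affineSpan_of_mem_of_ne
      (by simp) (by simp) (by simp) hza.symm
  have hc' : c ∈ line[𝕜, a, z] :=
    hc.mem_affineSpan_of_mem_of_ne (by simp) (by simp) (by simp) hza.symm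
  exact h ((collinear_insert_insert_of_mem_affineSpan_pair hb hc').subset
    (by simp [insert_subset_iff]))

end ConvexIndependent

section Plane

variable {V : Type*} [NormedAddCommGroup V] [NormedSpace ℝ V] [FiniteDimensional ℝ V]

theorem interior_convexHull_nonempty_of_not_collinear (hV : finrank ℝ V = 2) {a b c : V}
    (h : ¬ Collinear ℝ {a, b, c}) : (interior (convexHull ℝ {a, b, c})).Nonempty := by
  rw [interior_convexHull_nonempty_iff_affineSpan_eq_top]
  have hspan := (affineIndependent_iff_not_collinear_set.2 h
    ).affineSpan_eq_top_iff_card_eq_finrank_add_one.2 (by simp [hV])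
  rwa [Matrix.range_cons, Matrix.range_cons, Matrix.range_cons, Matrix.range_empty, union_empty,
    singleton_union, singleton_union] at hspan

theorem interior_convexHull_inter_nonempty_of_mem_segment_inter (hV : finrank ℝ V = 2)
    {a b c e z : V} (hab : z ∈ segment ℝ a b) (hce : z ∈ segment ℝ c e) (hza : z ≠ a)
    (habc : ¬ Collinear ℝ {a, b, c}) :
    (interior (convexHull ℝ {a, b, c}) ∩ interior (convexHull ℝ {a, c, e})).Nonempty := by
  obtain ⟨q, hq⟩ := interior_convexHull_nonempty_of_not_collinear hV
    (not_collinear_of_mem_segment hab hza habc)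
  have hsub : ∀ {s : Set V}, a ∈ s → c ∈ s → z ∈ convexHull ℝ s →
      convexHull ℝ {a, c, z} ⊆ convexHull ℝ s := fun ha hc hz =>
    convexHull_min (insert_subset (subset_convexHull ℝ _ ha)
      (insert_subset (subset_convexHull ℝ _ hc) (singleton_subset_iff.2 hz)))
      (convex_convexHull ℝ _)
  exact ⟨q,
    interior_mono (hsub (by simp) (by simp) (segment_subset_convexHull (by simp) (by simp) hab)) hq,
    interior_mono (hsub (by simp) (by simp) (segment_subset_convexHull (by simp) (by simp) hce)) hq⟩

theorem ConvexIndependent.exists_ne_interior_convexHull_inter_nonempty (hV : finrank ℝ V = 2)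
    {x : Fin 4 → V} (hx : ConvexIndependent ℝ x) :
    ∃ k l, k ≠ l ∧
      (interior (convexHull ℝ (x '' {k}ᶜ)) ∩ interior (convexHull ℝ (x '' {l}ᶜ))).Nonempty := by
  have hdep : ¬ AffineIndependent ℝ x := by
    rw [← finrank_vectorSpan_le_iff_not_affineIndependent ℝ x (n := 2) rfl, ← hV]
    exact Submodule.finrank_le _
  obtain ⟨I, z, hz⟩ := Convex.radon_partition hdep
  have hI := one_lt_ncard_iff_nontrivial.2 (hx.nontrivial_of_mem_convexHull_inter hz)
  have hIc := one_lt_ncard_iff_nontrivial.2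
    (hx.nontrivial_of_mem_convexHull_inter (I := Iᶜ) (by rwa [compl_compl, inter_comm]))
  have hsum : I.ncard + Iᶜ.ncard = 4 := by simpa using ncard_add_ncard_compl I
  obtain ⟨k, l, hkl, rfl⟩ := ncard_eq_two.1 (by omega : I.ncard = 2)
  obtain ⟨m, n, hmn, hc⟩ := ncard_eq_two.1 (by omega : ({k, l}ᶜ : Set (Fin 4)).ncard = 2)
  have hm : m ≠ k ∧ m ≠ l := by
    simpa using (hc ▸ mem_insert m {n} : m ∈ ({k, l}ᶜ : Set (Fin 4)))
  have hn : n ≠ k ∧ n ≠ l := by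
    simpa using (hc ▸ mem_insert_of_mem m rfl : n ∈ ({k, l}ᶜ : Set (Fin 4)))
  rw [hc, image_pair, image_pair, convexHull_pair, convexHull_pair] at hz
  have hzk : z ≠ x k := fun h => by
    have := hx {m, n} k (by rw [image_pair, convexHull_pair, ← h]; exact hz.2)
    rcases this with rfl | rfl
    exacts [hm.1 rfl, hn.1 rfl]
  have hmem : ∀ {i j : Fin 4}, i ≠ j → x i ∈ x '' {j}ᶜ := fun h => mem_image_of_mem x h
  refine ⟨n, l, hn.2, (interior_convexHull_inter_nonempty_of_mem_segment_inter hV hz.1 hz.2 hzk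
    (hx.not_collinear hkl hm.2.symm hm.1.symm)).mono (inter_subset_inter ?_ ?_)⟩ <;>
    refine interior_mono (convexHull_mono ?_) <;>
    simp only [insert_subset_iff, singleton_subset_iff]
  exacts [⟨hmem hn.1.symm, hmem hn.2.symm, hmem hmn⟩, ⟨hmem hkl, hmem hm.2, hmem hn.2⟩]

end Plane

section MinimalInfeasible

variable {ι : Type*}

theorem exists_convexHull_sdiff_singleton_subset_of_minimal_infeasible {E : Type*} [AddCommGroup E]
    [Module ℝ E] {P : ι → Set E} (hconv : ∀ i, Convex ℝ (P i)) {T : Set E}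
    (hintern : ∀ i, ∀ v ∈ T, v ∈ P i → v ∈ extremePoints ℝ (P i))
    (hinfeas : ¬ ∃ i, T ⊆ extremePoints ℝ (P i))
    (hmin : ∀ T' ⊆ T, T' ≠ T → ∃ i, T' ⊆ extremePoints ℝ (P i)) {v : E} (hv : v ∈ T) :
    ∃ i, convexHull ℝ (T \ {v}) ⊆ P i ∧ v ∉ P i := by
  obtain ⟨i, hi⟩ := hmin _ sdiff_subset (sdiff_singleton_ssubset.2 hv).ne
  refine ⟨i, convexHull_min (hi.trans extremePoints_subset) (hconv i), fun hvi => hinfeas ⟨i, ?_⟩⟩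
  intro w hw
  rcases eq_or_ne w v with rfl | hwv
  exacts [hintern i w hv hvi, hi ⟨hw, hwv⟩]

theorem eq_of_interior_inter_nonempty {E : Type*} [AddCommGroup E] [Module ℝ E]
    [TopologicalSpace E] {P : ι → Set E}
    (hdisj : ∀ i j, i ≠ j → Disjoint (intrinsicInterior ℝ (P i)) (intrinsicInterior ℝ (P j)))
    {i j : ι} {A B : Set E} (hA : A ⊆ P i) (hB : B ⊆ P j) (h : (interior A ∩ interior B).Nonempty) :
    i = j := by
  by_contra hij
  obtain ⟨q, hqA, hqB⟩ := h
  exact disjoint_left.1 (hdisj i j hij) (interior_subset_intrinsicInterior (interior_mono hA hqA))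
    (interior_subset_intrinsicInterior (interior_mono hB hqB))

theorem ncard_le_three_of_minimal_infeasible {V : Type*} [NormedAddCommGroup V] [NormedSpace ℝ V]
    [FiniteDimensional ℝ V] (hV : finrank ℝ V = 2) {P : ι → Set V} (hconv : ∀ i, Convex ℝ (P i))
    (hdisj : ∀ i j, i ≠ j → Disjoint (intrinsicInterior ℝ (P i)) (intrinsicInterior ℝ (P j)))
    {T : Set V} (hintern : ∀ i, ∀ v ∈ T, v ∈ P i → v ∈ extremePoints ℝ (P i))
    (hinfeas : ¬ ∃ i, T ⊆ extremePoints ℝ (P i))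
    (hmin : ∀ T' ⊆ T, T' ≠ T → ∃ i, T' ⊆ extremePoints ℝ (P i)) :
    T.ncard ≤ 3 := by
  by_contra! hcard
  choose cell hcell hnot using fun v : T =>
    exists_convexHull_sdiff_singleton_subset_of_minimal_infeasible hconv hintern hinfeas hmin v.2
  have hT : ConvexIndependent ℝ ((↑) : T → V) :=
    convexIndependent_set_iff_notMem_convexHull_sdiff.2 fun v hv hmem =>
      hnot ⟨v, hv⟩ (hcell ⟨v, hv⟩ hmem)
  have := (finite_of_ncard_pos (by omega : 0 < T.ncard)).fintype
  obtain ⟨e⟩ : Nonempty (Fin 4 ↪ T) := Function.Embedding.nonempty_of_card_le (by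
    rw [Fintype.card_fin, ← Nat.card_eq_fintype_card, Nat.card_coe_set_eq]; omega)
  obtain ⟨k, l, hkl, hq⟩ := (hT.comp_embedding e).exists_ne_interior_convexHull_inter_nonempty hV
  have himage : ∀ k, (↑) ∘ e '' {k}ᶜ ⊆ T \ {(e k : V)} := by
    rintro k _ ⟨j, hj, rfl⟩
    exact ⟨(e j).2, fun h => hj (e.injective (Subtype.ext h))⟩
  have hcell_ne : cell (e k) ≠ cell (e l) := fun h => hnot (e k)
    (h ▸ hcell (e l) (subset_convexHull ℝ _ (himage l (mem_image_of_mem _ hkl))))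
  exact hcell_ne (eq_of_interior_inter_nonempty hdisj ((convexHull_mono (himage k)).trans
    (hcell (e k))) ((convexHull_mono (himage l)).trans (hcell (e l))) hq)

end MinimalInfeasible

/-- For a polyhedral partition of a bounded region of the plane satisfying the
internal-vertex condition, every minimal infeasible set of the associated combinatorial
disjunctive constraint (ground set the union of extreme points, feasible sets those
contained in the extreme points of a single polytope) has cardinality at most 3. -/
theorem stmt19 (d : ℕ) (P : Fin d → Set (ℝ × ℝ))
    (hpoly : ∀ i, ∃ V : Finset (ℝ × ℝ), P i = convexHull ℝ (V : Set (ℝ × ℝ)))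
    (hdisj : ∀ i j, i ≠ j →
      Disjoint (intrinsicInterior ℝ (P i)) (intrinsicInterior ℝ (P j)))
    (hintern : ∀ i, ∀ v ∈ ⋃ i', Set.extremePoints ℝ (P i'),
      v ∈ P i → v ∈ Set.extremePoints ℝ (P i)) :
    ∀ T : Set (ℝ × ℝ), T ⊆ (⋃ i, Set.extremePoints ℝ (P i)) →
      (¬ ∃ i, T ⊆ Set.extremePoints ℝ (P i)) →
      (∀ T' ⊆ T, T' ≠ T → ∃ i, T' ⊆ Set.extremePoints ℝ (P i)) →
      T.ncard ≤ 3 := by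
  intro T hTJ hinfeas hmin
  have hconv : ∀ i, Convex ℝ (P i) := fun i => by
    obtain ⟨V, hV⟩ := hpoly i
    exact hV ▸ convex_convexHull ℝ _
  exact ncard_le_three_of_minimal_infeasible (by simp) hconv hdisj
    (fun i v hv => hintern i v (hTJ hv)) hinfeas hmin
end
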